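/- arXiv:2103.17169 — 2 statements merged into one kernel-verified Lean document; each statement's English description precedes it below -/
import Mathlib

section
/- The system (Fin^i, π_{i,j})_{0<i≤j<ω}, where π_{i,j} : ω^j → ω^i is the projection onto the last i coordinates, is a coherent system of quasi-homomorphisms satisfying condition (C); hence Fin_ω = lim←(Fin^n)_{n∈ω} is an ideal. -/
/-- An ideal on a set `X`: a family of subsets of `X` closed under subsets and
finite unions, containing all finite sets, and proper. -/
structure IdealOn (X : Type*) where
  sets : Set (Set X)
  subset_mem : ∀ ⦃A B : Set X⦄, A ∈ sets → B ⊆ A → B ∈ sets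
  union_mem : ∀ ⦃A B : Set X⦄, A ∈ sets → B ∈ sets → A ∪ B ∈ sets
  finite_mem : ∀ A : Set X, A.Finite → A ∈ sets
  univ_not_mem : Set.univ ∉ sets

/-- The dual filter of an ideal: the family of complements of its members. -/
def IdealOn.dual {X : Type*} (I : IdealOn X) : Set (Set X) := (·ᶜ) '' I.sets

/-- `FinPow n` is the Fubini power `Fin^{n+1}` of the ideal of finite sets, an
ideal on `ω^{n+1}` (represented as `Fin (n+1) → ℕ`). -/
def FinPow : (n : ℕ) → Set (Set (Fin (n + 1) → ℕ))
  | 0 => {A | A.Finite}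
  | n + 1 => {A | {k : ℕ | {y : Fin (n + 1) → ℕ | Fin.cons k y ∈ A} ∉ FinPow n}.Finite}

/-- Projection of `ω^n` onto the last `m` coordinates. -/
def lastProj {m n : ℕ} (h : m ≤ n) (x : Fin n → ℕ) : Fin m → ℕ :=
  fun k => x ⟨n - m + k.val, by have := k.isLt; omega⟩

/-- The inductive limit `Fin_ω` of the Fubini powers `(Fin^n)_{n>0}` along the
projections onto the last coordinates. -/
def FinOmega : Set (Set (Σ n : ℕ, Fin (n + 1) → ℕ)) :=
  {M | ∃ m : ℕ, ∃ P : Set (Fin (m + 1) → ℕ), Pᶜ ∈ FinPow m ∧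
    ∀ (n : ℕ) (h : m ≤ n), ∀ x : Fin (n + 1) → ℕ,
      lastProj (Nat.succ_le_succ h) x ∈ P → (⟨n, x⟩ : Σ n : ℕ, Fin (n + 1) → ℕ) ∉ M}

/- ## Auxiliary lemmas -/

lemma lastProj_coh {m p n : ℕ} (hmp : m ≤ p) (hpn : p ≤ n) (x : Fin n → ℕ) :
    lastProj (hmp.trans hpn) x = lastProj hmp (lastProj hpn x) := by
  funext k
  simp only [lastProj]
  congr 1
  apply Fin.ext
  simp only
  omega

lemma lastProj_self {n : ℕ} (x : Fin n → ℕ) : lastProj le_rfl x = x := by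
  funext k
  simp only [lastProj]
  congr 1
  apply Fin.ext
  simp

lemma finPow_subset_mem : ∀ n : ℕ, ∀ ⦃A B : Set (Fin (n + 1) → ℕ)⦄,
    A ∈ FinPow n → B ⊆ A → B ∈ FinPow n := by
  intro n
  induction n with
  | zero =>
    intro A B hA hBA
    exact Set.Finite.subset hA hBA
  | succ n ih =>
    intro A B hA hBA
    simp only [FinPow, Set.mem_setOf_eq] at hA ⊢
    refine hA.subset ?_
    intro k hk hA'
    exact hk (ih hA' (fun y hy => hBA hy))

lemma finPow_union_mem : ∀ n : ℕ, ∀ ⦃A B : Set (Fin (n + 1) → ℕ)⦄,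
    A ∈ FinPow n → B ∈ FinPow n → A ∪ B ∈ FinPow n := by
  intro n
  induction n with
  | zero =>
    intro A B hA hB
    exact Set.Finite.union hA hB
  | succ n ih =>
    intro A B hA hB
    simp only [FinPow, Set.mem_setOf_eq] at hA hB ⊢
    refine (hA.union hB).subset ?_
    intro k hk
    simp only [Set.mem_setOf_eq, Set.mem_union] at hk ⊢
    by_contra hc
    push_neg at hc
    apply hk
    exact ih hc.1 hc.2

lemma finPow_finite_mem : ∀ n : ℕ, ∀ A : Set (Fin (n + 1) → ℕ),
    A.Finite → A ∈ FinPow n := by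
  intro n
  induction n with
  | zero => intro A hA; exact hA
  | succ n ih =>
    intro A hA
    simp only [FinPow, Set.mem_setOf_eq]
    refine Set.Finite.subset (Set.finite_empty) ?_
    intro k hk
    exfalso
    apply hk
    apply ih
    have : {y : Fin (n + 1) → ℕ | Fin.cons k y ∈ A} ⊆
        (fun y : Fin (n + 1) → ℕ => Fin.cons k y) ⁻¹' A := fun y hy => hy
    refine Set.Finite.preimage ?_ hA
    intro y _ z _ hyz
    funext i
    have := congrFun hyz i.succ
    simpa [Fin.cons_succ] using this

lemma finPow_univ_not_mem : ∀ n : ℕ, Set.univ ∉ FinPow n := by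
  intro n
  induction n with
  | zero =>
    intro h
    exact Set.infinite_univ (by
      have : (Set.univ : Set (Fin 1 → ℕ)).Finite := h
      exact this)
  | succ n ih =>
    intro h
    simp only [FinPow, Set.mem_setOf_eq] at h
    have : {k : ℕ | {y : Fin (n + 1) → ℕ | Fin.cons k y ∈ (Set.univ : Set (Fin (n+2) → ℕ))} ∉ FinPow n} = Set.univ := by
      ext k
      simp only [Set.mem_setOf_eq, Set.mem_univ, iff_true]
      exact ih
    rw [this] at h
    exact Set.infinite_univ h

lemma lastProj_succ_cons {n : ℕ} (k : ℕ) (y : Fin (n + 1) → ℕ) :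
    lastProj (Nat.le_succ (n + 1)) (Fin.cons k y) = y := by
  funext j
  simp only [lastProj]
  have : (⟨n + 2 - (n + 1) + j.val, by have := j.isLt; omega⟩ : Fin (n + 2)) = Fin.succ j := by
    apply Fin.ext
    simp [Fin.val_succ]
    omega
  rw [this, Fin.cons_succ]

lemma finPow_preimage_succ {n : ℕ} (A : Set (Fin (n + 1) → ℕ)) (hA : A ∈ FinPow n) :
    (lastProj (Nat.le_succ (n + 1))) ⁻¹' A ∈ FinPow (n + 1) := by
  simp only [FinPow, Set.mem_setOf_eq]
  refine Set.Finite.subset Set.finite_empty ?_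
  intro k hk
  exfalso
  apply hk
  have : {y : Fin (n + 1) → ℕ | Fin.cons k y ∈ (lastProj (Nat.le_succ (n + 1))) ⁻¹' A} = A := by
    ext y
    simp only [Set.mem_setOf_eq, Set.mem_preimage, lastProj_succ_cons]
  rw [this]
  exact hA

lemma finPow_preimage : ∀ (m n : ℕ) (h : m ≤ n), ∀ A ∈ FinPow m,
    (lastProj (Nat.succ_le_succ h)) ⁻¹' A ∈ FinPow n := by
  intro m n h
  induction n, h using Nat.le_induction with
  | base =>
    intro A hA
    have : (lastProj (Nat.succ_le_succ (le_refl m))) ⁻¹' A = A := by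
      ext x
      simp [Set.mem_preimage, lastProj_self]
    rwa [this]
  | succ n hmn ih =>
    intro A hA
    have hco : ∀ x : Fin (n + 2) → ℕ,
        lastProj (Nat.succ_le_succ (hmn.trans (Nat.le_succ n))) x =
          lastProj (Nat.succ_le_succ hmn) (lastProj (Nat.le_succ (n + 1)) x) :=
      fun x => lastProj_coh (Nat.succ_le_succ hmn) (Nat.le_succ (n + 1)) x
    have : (lastProj (Nat.succ_le_succ (hmn.trans (Nat.le_succ n)))) ⁻¹' A =
        (lastProj (Nat.le_succ (n + 1))) ⁻¹' ((lastProj (Nat.succ_le_succ hmn)) ⁻¹' A) := by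
      ext x
      simp only [Set.mem_preimage, hco]
    have heq : (Nat.succ_le_succ (hmn.trans (Nat.le_succ n)) : m + 1 ≤ n + 2) =
        Nat.succ_le_succ (Nat.le_succ_of_le hmn) := rfl
    rw [← heq] at *
    rw [this]
    exact finPow_preimage_succ _ (ih A hA)

/-- Witness lifting: membership in FinOmega can be witnessed at any larger index. -/
lemma finOmega_lift {M : Set (Σ n : ℕ, Fin (n + 1) → ℕ)} {m : ℕ}
    {P : Set (Fin (m + 1) → ℕ)} (hP : Pᶜ ∈ FinPow m)
    (hM : ∀ (n : ℕ) (h : m ≤ n), ∀ x : Fin (n + 1) → ℕ,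
      lastProj (Nat.succ_le_succ h) x ∈ P → (⟨n, x⟩ : Σ n : ℕ, Fin (n + 1) → ℕ) ∉ M)
    (m' : ℕ) (hmm' : m ≤ m') :
    ∃ P' : Set (Fin (m' + 1) → ℕ), P'ᶜ ∈ FinPow m' ∧
      ∀ (n : ℕ) (h : m' ≤ n), ∀ x : Fin (n + 1) → ℕ,
        lastProj (Nat.succ_le_succ h) x ∈ P' → (⟨n, x⟩ : Σ n : ℕ, Fin (n + 1) → ℕ) ∉ M := by
  refine ⟨(lastProj (Nat.succ_le_succ hmm')) ⁻¹' P, ?_, ?_⟩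
  · have : ((lastProj (Nat.succ_le_succ hmm')) ⁻¹' P)ᶜ = (lastProj (Nat.succ_le_succ hmm')) ⁻¹' Pᶜ := rfl
    rw [this]
    exact finPow_preimage m m' hmm' _ hP
  · intro n h x hx
    apply hM n (hmm'.trans h) x
    have := lastProj_coh (Nat.succ_le_succ hmm') (Nat.succ_le_succ h) x
    have heq : (Nat.succ_le_succ (hmm'.trans h) : m + 1 ≤ n + 1) =
        ((Nat.succ_le_succ hmm').trans (Nat.succ_le_succ h)) := rfl
    rw [heq, this]
    exact hx

/-- The projections `π_{m+1,n+1}` onto the last coordinates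
(everywhere defined) form a coherent system of quasi-homomorphisms for
`(Fin^{n+1})_n` trivially satisfying condition (C); hence
`Fin_ω = lim←(Fin^n)` is an ideal. -/
theorem finOmega_isIdeal :
    (∀ (m p n : ℕ) (hmp : m ≤ p) (hpn : p ≤ n), ∀ x : Fin (n + 1) → ℕ,
      lastProj (Nat.succ_le_succ (hmp.trans hpn)) x =
        lastProj (Nat.succ_le_succ hmp) (lastProj (Nat.succ_le_succ hpn) x)) ∧
    (∀ (m n : ℕ) (h : m ≤ n), ∀ A ∈ FinPow m,
      (lastProj (Nat.succ_le_succ h)) ⁻¹' A ∈ FinPow n) ∧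
    (∃ K : IdealOn (Σ n : ℕ, Fin (n + 1) → ℕ), K.sets = FinOmega) := by
  refine ⟨?_, finPow_preimage, ?_⟩
  · intro m p n hmp hpn x
    have := lastProj_coh (Nat.succ_le_succ hmp) (Nat.succ_le_succ hpn) x
    have heq : (Nat.succ_le_succ (hmp.trans hpn) : m + 1 ≤ n + 1) =
        ((Nat.succ_le_succ hmp).trans (Nat.succ_le_succ hpn)) := rfl
    rw [heq, this]
  · refine ⟨⟨FinOmega, ?_, ?_, ?_, ?_⟩, rfl⟩
    · -- subset_mem
      rintro A B ⟨m, P, hP, hA⟩ hBA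
      exact ⟨m, P, hP, fun n h x hx hB => hA n h x hx (hBA hB)⟩
    · -- union_mem
      rintro A B ⟨m, P, hP, hA⟩ ⟨m', P', hP', hB⟩
      obtain ⟨Q, hQ, hA'⟩ := finOmega_lift hP hA (max m m') (le_max_left m m')
      obtain ⟨Q', hQ', hB'⟩ := finOmega_lift hP' hB (max m m') (le_max_right m m')
      refine ⟨max m m', Q ∩ Q', ?_, ?_⟩
      · rw [Set.compl_inter]
        exact finPow_union_mem _ hQ hQ'
      · intro n h x hx
        rintro (hmem | hmem)
        · exact hA' n h x hx.1 hmem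
        · exact hB' n h x hx.2 hmem
    · -- finite_mem
      intro A hA
      have hfst : (Sigma.fst '' A).Finite := hA.image _
      obtain ⟨m, hm⟩ := hfst.bddAbove
      refine ⟨m + 1, Set.univ, ?_, ?_⟩
      · simp only [Set.compl_univ]
        exact finPow_finite_mem _ _ Set.finite_empty
      · intro n h x _ hmem
        have : n ∈ Sigma.fst '' A := ⟨⟨n, x⟩, hmem, rfl⟩
        have := hm this
        omega
    · -- univ_not_mem
      rintro ⟨m, P, hP, hA⟩
      by_cases hPe : P = ∅
      · rw [hPe, Set.compl_empty] at hP
        exact finPow_univ_not_mem m hP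
      · obtain ⟨x, hx⟩ := Set.nonempty_iff_ne_empty.mpr hPe
        have := hA m le_rfl x (by rwa [lastProj_self])
        exact this (Set.mem_univ _)
end

section
/- Fix partitions {X_s : s ∈ ω^{n+1}} of ω into infinite sets for each n ∈ ω such that any finite intersection ∩_{i∈F} X_{s_i} with s_i ∈ ω^{i+1} is infinite. Let Fin'_ω be the ideal on ω generated by ∪_n Fin^{n+2}({X_s : s ∈ ω^{n+1}}), and for each n let J_n = {A ⊆ ω : φ_n(A) contains a set of the form M_0 × ⋯ × M_n with M_i ∈ (Fin^{i+1})*}, where φ_n(A) = {(s_0,…,s_n) ∈ ω × ω² × ⋯ × ω^{n+1} : A ∩ X_{s_0} ∩ ⋯ ∩ X_{s_n} is finite}. Then Fin'_ω = ∪_{n∈ω} J_n and J_n ⊆ J_{n+1} for every n. -/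
/-- A system of partitions `{X_s : s ∈ ω^{n+1}}` of `ω` into infinite sets,
with all finite cross-intersections infinite. -/
structure PartitionSystem (X : (n : ℕ) → (Fin (n + 1) → ℕ) → Set ℕ) : Prop where
  infinite : ∀ n s, (X n s).Infinite
  disjoint : ∀ (n : ℕ) (s t : Fin (n + 1) → ℕ), s ≠ t → Disjoint (X n s) (X n t)
  cover : ∀ n : ℕ, (⋃ s, X n s) = Set.univ
  cross : ∀ (F : Finset ℕ) (s : ∀ i : ℕ, Fin (i + 1) → ℕ),
    (⋂ i ∈ F, X i (s i)).Infinite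

/-- The copy `Fin^{n+2}({X_s : s ∈ ω^{n+1}})` on `ω` of the Fubini power,
with partition pieces `X s`. -/
def FinPowCopy {n : ℕ} (X : (Fin (n + 1) → ℕ) → Set ℕ) : Set (Set ℕ) :=
  {A | {s : Fin (n + 1) → ℕ | ¬ (A ∩ X s).Finite} ∈ FinPow n}

/-- `Fin'_ω`: the ideal on `ω` generated by `⋃ n, Fin^{n+2}({X_s : s ∈ ω^{n+1}})`. -/
def FinOmega' (X : (n : ℕ) → (Fin (n + 1) → ℕ) → Set ℕ) : Set (Set ℕ) :=
  {A | ∃ F : Finset ℕ, ∃ B : ℕ → Set ℕ,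
    (∀ n ∈ F, B n ∈ FinPowCopy (X n)) ∧ A ⊆ ⋃ n ∈ F, B n}

/-- The family `J_n`: all `A ⊆ ω` such that `φ_n(A)` contains a product
`M_0 × ⋯ × M_n` with each `M_i` in the dual filter of `Fin^{i+1}`, where
`φ_n(A) = {(s_0,…,s_n) : A ∩ X_{s_0} ∩ ⋯ ∩ X_{s_n} is finite}`. -/
def Jfam (X : (n : ℕ) → (Fin (n + 1) → ℕ) → Set ℕ) (n : ℕ) : Set (Set ℕ) :=
  {A | ∃ M : ∀ i : ℕ, Set (Fin (i + 1) → ℕ),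
    (∀ i ≤ n, (M i)ᶜ ∈ FinPow i) ∧
    ∀ s : ∀ i : ℕ, Fin (i + 1) → ℕ, (∀ i ≤ n, s i ∈ M i) →
      (A ∩ ⋂ i ∈ Finset.range (n + 1), X i (s i)).Finite}

lemma finPow_mono : ∀ (n : ℕ) {A B : Set (Fin (n + 1) → ℕ)},
    B ⊆ A → A ∈ FinPow n → B ∈ FinPow n := by
  intro n
  induction n with
  | zero => intro A B hBA hA; exact Set.Finite.subset hA hBA
  | succ n ih =>
    intro A B hBA hA
    refine Set.Finite.subset hA ?_
    intro k hk
    simp only [Set.mem_setOf_eq] at hk ⊢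
    intro hAk
    exact hk (ih (fun y hy => hBA hy) hAk)

lemma finPow_empty : ∀ n : ℕ, (∅ : Set (Fin (n + 1) → ℕ)) ∈ FinPow n := by
  intro n
  induction n with
  | zero => exact Set.finite_empty
  | succ n ih =>
    show Set.Finite _
    have h1 : ∀ k : ℕ,
        {y : Fin (n + 1) → ℕ | Fin.cons k y ∈ (∅ : Set (Fin (n + 2) → ℕ))} = ∅ := by
      intro k; ext y; simp
    have h2 : {k : ℕ | {y : Fin (n + 1) → ℕ |
        Fin.cons k y ∈ (∅ : Set (Fin (n + 2) → ℕ))} ∉ FinPow n} = ∅ := by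
      ext k
      simp only [Set.mem_setOf_eq, Set.mem_empty_iff_false, iff_false, not_not, h1 k]
      exact ih
    rw [h2]
    exact Set.finite_empty

lemma finite_code_le (m c : ℕ) :
    {t : Fin (m + 1) → ℕ | Encodable.encode t ≤ c}.Finite := by
  have h : {t : Fin (m + 1) → ℕ | Encodable.encode t ≤ c}
      = Encodable.encode ⁻¹' (Set.Iic c) := rfl
  rw [h]
  exact Set.Finite.preimage (Function.Injective.injOn Encodable.encode_injective)
    (Set.finite_Iic c)

lemma finite_bounded_part {X : (n : ℕ) → (Fin (n + 1) → ℕ) → Set ℕ} {A : Set ℕ}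
    {M : ∀ i : ℕ, Set (Fin (i + 1) → ℕ)} {n : ℕ}
    (hA : ∀ s : ∀ i : ℕ, Fin (i + 1) → ℕ, (∀ i ≤ n, s i ∈ M i) →
      (A ∩ ⋂ i ∈ Finset.range (n + 1), X i (s i)).Finite)
    (σ : ℕ → ∀ i : ℕ, Fin (i + 1) → ℕ) (hσ : ∀ x i, x ∈ X i (σ x i)) (c : ℕ) :
    (A ∩ {x | ∀ j ≤ n, σ x j ∈ M j ∧ Encodable.encode (σ x j) ≤ c}).Finite := by
  classical
  set V : Set (∀ j : Fin (n + 1), Fin ((j : ℕ) + 1) → ℕ) :=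
    {v | ∀ j : Fin (n + 1), v j ∈ M (j : ℕ) ∧ Encodable.encode (v j) ≤ c} with hV
  have hVfin : V.Finite := by
    refine Set.Finite.subset (Set.Finite.pi (t := fun j : Fin (n + 1) =>
      {t : Fin ((j : ℕ) + 1) → ℕ | Encodable.encode t ≤ c}) (fun j => finite_code_le _ c)) ?_
    intro v hv
    exact fun j _ => (hv j).2
  have hGfin : ∀ v ∈ V, (A ∩ ⋂ j : Fin (n + 1), X (j : ℕ) (v j)).Finite := by
    intro v hv
    refine Set.Finite.subset (hA (fun i => if h : i < n + 1 then v ⟨i, h⟩ else fun _ => 0) ?_) ?_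
    · intro i hi
      simp only [dif_pos (Nat.lt_succ_of_le hi)]
      exact (hv ⟨i, Nat.lt_succ_of_le hi⟩).1
    · intro x hx
      refine ⟨hx.1, ?_⟩
      simp only [Set.mem_iInter, Finset.mem_range]
      intro i hi
      simp only [dif_pos hi]
      exact Set.mem_iInter.1 hx.2 ⟨i, hi⟩
  refine Set.Finite.subset (Set.Finite.biUnion hVfin hGfin) ?_
  intro x hx
  refine Set.mem_iUnion₂.2 ⟨fun j : Fin (n + 1) => σ x (j : ℕ), ?_, ?_⟩
  · intro j
    exact hx.2 (j : ℕ) (Nat.lt_succ_iff.1 j.isLt)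
  · exact ⟨hx.1, Set.mem_iInter.2 fun j => hσ x (j : ℕ)⟩

/-- `Fin'_ω = ⋃_n J_n`, and `J_n ⊆ J_{n+1}` for every `n`. -/
theorem finOmega'_eq_iUnion_Jfam (X : (n : ℕ) → (Fin (n + 1) → ℕ) → Set ℕ)
    (hX : PartitionSystem X) :
    (FinOmega' X = ⋃ n : ℕ, Jfam X n) ∧ (∀ n : ℕ, Jfam X n ⊆ Jfam X (n + 1)) := by
  classical
  have hexit : ∀ (x : ℕ) (i : ℕ), ∃ s : Fin (i + 1) → ℕ, x ∈ X i s := by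
    intro x i
    have h := hX.cover i
    have hx : x ∈ ⋃ s, X i s := h ▸ Set.mem_univ x
    exact Set.mem_iUnion.1 hx
  choose σ hσ using hexit
  have huniq : ∀ (x i : ℕ) (s : Fin (i + 1) → ℕ), x ∈ X i s → σ x i = s := by
    intro x i s hxs
    by_contra hne
    exact Set.disjoint_left.1 (hX.disjoint i (σ x i) s hne) (hσ x i) hxs
  constructor
  · apply Set.Subset.antisymm
    · -- FinOmega' ⊆ ⋃ Jfam
      rintro A ⟨F, B, hB, hsub⟩
      set m := F.sup id with hm
      refine Set.mem_iUnion.2 ⟨m, ?_⟩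
      refine ⟨fun i => if i ∈ F then {s | (B i ∩ X i s).Finite} else Set.univ, ?_, ?_⟩
      · intro i _
        by_cases h : i ∈ F
        · simp only [if_pos h, Set.compl_setOf]
          exact hB i h
        · simp only [if_neg h, Set.compl_univ]
          exact finPow_empty i
      · intro s hs
        have hfin : ∀ k ∈ F, (B k ∩ X k (s k)).Finite := by
          intro k hk
          have hkm : k ≤ m := Finset.le_sup (f := id) hk
          have h2 := hs k hkm
          simp only [if_pos hk] at h2
          exact h2
        refine Set.Finite.subset (Set.Finite.biUnion F.finite_toSet hfin) ?_
        intro x hx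
        obtain ⟨k, hk, hxk⟩ : ∃ k ∈ F, x ∈ B k := by
          have h3 := hsub hx.1
          simpa using h3
        refine Set.mem_biUnion hk ⟨hxk, ?_⟩
        have hkm : k < m + 1 := Nat.lt_succ_of_le (Finset.le_sup (f := id) hk)
        have h4 := hx.2
        simp only [Set.mem_iInter, Finset.mem_range] at h4
        exact h4 k hkm
    · -- ⋃ Jfam ⊆ FinOmega'
      intro A hA
      obtain ⟨n, M, hM, hMA⟩ := Set.mem_iUnion.1 hA
      refine ⟨Finset.range (n + 1), fun i => A ∩ ({x | σ x i ∉ M i} ∪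
        {x | ∀ j ≤ n, σ x j ∈ M j ∧ Encodable.encode (σ x j) ≤ Encodable.encode (σ x i)}),
        ?_, ?_⟩
      · intro i hi
        rw [Finset.mem_range] at hi
        have hi' : i ≤ n := Nat.lt_succ_iff.1 hi
        refine finPow_mono i (A := (M i)ᶜ) ?_ (hM i hi')
        intro s hs
        simp only [Set.mem_setOf_eq] at hs
        by_contra hsM
        rw [Set.notMem_compl_iff] at hsM
        apply hs
        refine Set.Finite.subset
          (finite_bounded_part hMA σ hσ (Encodable.encode s)) ?_
        rintro x ⟨hxB, hxs⟩
        have hσx : σ x i = s := huniq x i s hxs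
        obtain ⟨hxA, hxr⟩ := hxB
        rcases hxr with h1 | h2
        · simp only [Set.mem_setOf_eq, hσx] at h1
          exact absurd hsM h1
        · simp only [Set.mem_setOf_eq, hσx] at h2
          exact ⟨hxA, h2⟩
      · intro x hx
        by_cases hbad : ∃ j ≤ n, σ x j ∉ M j
        · obtain ⟨j, hj, hjM⟩ := hbad
          refine Set.mem_biUnion (Finset.mem_range.2 (Nat.lt_succ_of_le hj)) ?_
          exact ⟨hx, Or.inl hjM⟩
        · push_neg at hbad
          obtain ⟨i, hi, hmax⟩ := Finset.exists_max_image (Finset.range (n + 1))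
            (fun j => Encodable.encode (σ x j)) ⟨0, Finset.mem_range.2 (Nat.succ_pos n)⟩
          refine Set.mem_biUnion hi ?_
          refine ⟨hx, Or.inr fun j hj => ⟨hbad j hj, ?_⟩⟩
          exact hmax j (Finset.mem_range.2 (Nat.lt_succ_of_le hj))
  · -- monotonicity
    intro n A hA
    obtain ⟨M, hM, hMA⟩ := hA
    refine ⟨fun i => if i = n + 1 then Set.univ else M i, ?_, ?_⟩
    · intro i hi
      by_cases h : i = n + 1
      · simp only [if_pos h, Set.compl_univ]
        subst h
        exact finPow_empty _
      · simp only [if_neg h, Set.compl_univ]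
        exact hM i (by omega)
    · intro s hs
      have hs' : ∀ i ≤ n, s i ∈ M i := by
        intro i hi
        have h5 := hs i (by omega)
        have hne : i ≠ n + 1 := by omega
        simp only [if_neg hne] at h5
        exact h5
      refine Set.Finite.subset (hMA s hs') ?_
      intro x hx
      refine ⟨hx.1, ?_⟩
      have h6 := hx.2
      simp only [Set.mem_iInter, Finset.mem_range] at h6 ⊢
      intro i hi
      exact h6 i (by omega)
end
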